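/- Let B ∈ ℝ^{m×n} with partitioned SVD B = U diag(Σ₁, Σ₂)[V₁ V₂]^T, Σ₁ ∈ ℝ^{r×r}, and Ω ∈ ℝ^{n×(r+p)} such that V₁^T Ω has full row rank. Then for any perturbation E ∈ ℝ^{m×n}: ‖(I − P_{(B+E)Ω}) B‖_F ≤ √(‖Σ₂‖_F² + ‖Σ₂ V₂^T Ω (V₁^T Ω)^†‖_F²) + ‖E V₂ (V₂^T Ω)(V₁^T Ω)^†‖_F + ‖E‖_F. -/

import Mathlib

open MeasureTheory ProbabilityTheory Real Matrix Filter

/-- Frobenius norm of a real matrix. -/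
noncomputable def frob {m n : Type*} [Fintype m] [Fintype n]
    (M : Matrix m n ℝ) : ℝ :=
  Real.sqrt (∑ i, ∑ j, (M i j) ^ 2)

/-- The four Penrose conditions characterizing the Moore–Penrose pseudoinverse. -/
def IsMoorePenrose {m n : Type*} [Fintype m] [Fintype n]
    (M : Matrix m n ℝ) (Md : Matrix n m ℝ) : Prop :=
  M * Md * M = M ∧ Md * M * Md = Md ∧ (M * Md)ᵀ = M * Md ∧ (Md * M)ᵀ = Md * M

/-- The Moore–Penrose pseudoinverse of a real matrix (it exists and is unique). -/
noncomputable def pinv {m n : Type*} [Fintype m] [Fintype n]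
    (M : Matrix m n ℝ) : Matrix n m ℝ :=
  open scoped Classical in
  if h : ∃ Md, IsMoorePenrose M Md then h.choose else 0

namespace HMTAux

open Matrix

set_option linter.unusedSectionVars false

variable {m n k l : Type*} [Fintype m] [Fintype n] [Fintype k] [Fintype l]
variable [DecidableEq m] [DecidableEq n] [DecidableEq k] [DecidableEq l]

/-- Squared Frobenius norm. -/
noncomputable def frobSq (M : Matrix m n ℝ) : ℝ := ∑ i, ∑ j, (M i j) ^ 2

lemma frobSq_nonneg (M : Matrix m n ℝ) : 0 ≤ frobSq M :=
  Finset.sum_nonneg fun _ _ => Finset.sum_nonneg fun _ _ => sq_nonneg _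

lemma frob_eq (M : Matrix m n ℝ) : frob M = Real.sqrt (frobSq M) := rfl

lemma frob_nonneg (M : Matrix m n ℝ) : 0 ≤ frob M := Real.sqrt_nonneg _

lemma frob_sq (M : Matrix m n ℝ) : frob M ^ 2 = frobSq M :=
  Real.sq_sqrt (frobSq_nonneg M)

lemma frob_le_frob {A : Matrix m n ℝ} {B : Matrix k l ℝ}
    (h : frobSq A ≤ frobSq B) : frob A ≤ frob B := by
  rw [frob_eq, frob_eq]; exact Real.sqrt_le_sqrt h

lemma frobSq_eq_trace (M : Matrix m n ℝ) : frobSq M = Matrix.trace (Mᵀ * M) := by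
  simp only [frobSq, Matrix.trace, Matrix.diag, Matrix.mul_apply,
    Matrix.transpose_apply, sq]
  exact Finset.sum_comm

/-- `frob (A * C) = frob A` when `C` has orthonormal rows. -/
lemma frobSq_mul_rowOrtho (A : Matrix m n ℝ) (C : Matrix n k ℝ) (hC : C * Cᵀ = 1) :
    frobSq (A * C) = frobSq A := by
  rw [frobSq_eq_trace, frobSq_eq_trace, Matrix.transpose_mul, Matrix.mul_assoc,
    Matrix.trace_mul_comm]
  rw [show Aᵀ * (A * C) * Cᵀ = Aᵀ * (A * (C * Cᵀ)) by
    simp only [Matrix.mul_assoc], hC, Matrix.mul_one]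

/-- `frob (U * A) = frob A` when `U` has orthonormal columns. -/
lemma frobSq_ortho_mul (A : Matrix n k ℝ) (U : Matrix m n ℝ) (hU : Uᵀ * U = 1) :
    frobSq (U * A) = frobSq A := by
  rw [frobSq_eq_trace, frobSq_eq_trace, Matrix.transpose_mul]
  congr 1
  rw [Matrix.mul_assoc, ← Matrix.mul_assoc Uᵀ, hU, Matrix.one_mul]

lemma frobSq_fromRows (A : Matrix m k ℝ) (B : Matrix n k ℝ) :
    frobSq (fromRows A B) = frobSq A + frobSq B := by
  simp [frobSq, Fintype.sum_sum_type, Matrix.fromRows_apply_inl, Matrix.fromRows_apply_inr, Sum.elim_inl, Sum.elim_inr]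

lemma frobSq_fromCols (A : Matrix m k ℝ) (B : Matrix m l ℝ) :
    frobSq (fromCols A B) = frobSq A + frobSq B := by
  simp [frobSq, Fintype.sum_sum_type, Matrix.fromCols, Matrix.fromCols_apply_inl, Matrix.fromCols_apply_inr, Finset.sum_add_distrib]

lemma frobSq_neg (A : Matrix m n ℝ) : frobSq (-A) = frobSq A := by
  simp [frobSq]

lemma frob_neg (A : Matrix m n ℝ) : frob (-A) = frob A := by
  rw [frob_eq, frob_eq, frobSq_neg]

lemma frobSq_zero : frobSq (0 : Matrix m n ℝ) = 0 := by simp [frobSq]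

noncomputable def toE (M : Matrix m n ℝ) : EuclideanSpace ℝ (m × n) :=
  (WithLp.equiv 2 ((m × n) → ℝ)).symm (fun p => M p.1 p.2)

lemma frob_eq_norm (M : Matrix m n ℝ) : frob M = ‖toE M‖ := by
  unfold frob
  rw [EuclideanSpace.norm_eq, Fintype.sum_prod_type]
  congr 1
  refine Finset.sum_congr rfl fun i _ => Finset.sum_congr rfl fun j _ => ?_
  rw [show toE M (i, j) = M i j from rfl, Real.norm_eq_abs, sq_abs]

lemma frob_add_le (A B : Matrix m n ℝ) : frob (A + B) ≤ frob A + frob B := by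
  rw [frob_eq_norm, frob_eq_norm, frob_eq_norm]
  have h : toE (A + B) = toE A + toE B := by
    ext p
    rfl
  rw [h]
  exact norm_add_le _ _

lemma frob_sub_sub_le (X Y Z : Matrix m n ℝ) :
    frob (X - Y - Z) ≤ frob X + frob Y + frob Z := by
  have h1 : X - Y - Z = (X + -Y) + -Z := by abel
  rw [h1]
  calc frob ((X + -Y) + -Z) ≤ frob (X + -Y) + frob (-Z) := frob_add_le _ _
    _ ≤ (frob X + frob (-Y)) + frob (-Z) := by
        have := frob_add_le X (-Y); linarith
    _ = frob X + frob Y + frob Z := by rw [frob_neg, frob_neg]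

/-! ### Existence of the Moore–Penrose pseudoinverse -/

lemma conj_zero {M : Matrix m n ℝ} (h : Mᵀ * M = 0) : M = 0 := by
  ext i j
  have hj := congrFun (congrFun h j) j
  simp only [Matrix.mul_apply, Matrix.transpose_apply, Matrix.zero_apply] at hj
  have hnn : ∀ i ∈ Finset.univ, (0:ℝ) ≤ M i j * M i j := fun i _ => mul_self_nonneg _
  have h0 := (Finset.sum_eq_zero_iff_of_nonneg hnn).mp hj i (Finset.mem_univ i)
  simpa using mul_self_eq_zero.mp h0

variable [DecidableEq n]

lemma pow_cancel {A : Matrix n n ℝ} (hA : Aᵀ = A) :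
    ∀ (m : ℕ) (Y : Matrix n n ℝ), A ^ (m + 1) * Y = 0 → A * Y = 0 := by
  intro m
  induction m with
  | zero => intro Y h; simpa using h
  | succ m ih =>
    intro Y h
    apply ih Y
    apply conj_zero
    have ht : (A ^ (m + 1))ᵀ = A ^ (m + 1) := by
      rw [Matrix.transpose_pow, hA]
    rw [Matrix.transpose_mul, ht]
    have key : A ^ (m + 1) * A ^ (m + 1) = A ^ m * A ^ (m + 1 + 1) := by
      rw [← pow_add, ← pow_add]; congr 1; omega
    calc Yᵀ * A ^ (m + 1) * (A ^ (m + 1) * Y)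
        = Yᵀ * (A ^ m * (A ^ (m + 1 + 1) * Y)) := by
          rw [Matrix.mul_assoc, ← Matrix.mul_assoc (A ^ (m + 1)), key,
            Matrix.mul_assoc (A ^ m)]
      _ = 0 := by
          rw [h, Matrix.mul_zero, Matrix.mul_zero]

lemma pow_cancel' {A : Matrix n n ℝ} (hA : Aᵀ = A) (k : ℕ) (Y : Matrix n n ℝ)
    (h : A ^ k * Y = 0) : A * Y = 0 := by
  cases k with
  | zero => rw [pow_zero, Matrix.one_mul] at h; rw [h, Matrix.mul_zero]
  | succ m => exact pow_cancel hA m Y h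

lemma exists_sym_gen (A : Matrix n n ℝ) (hA : Aᵀ = A) :
    ∃ G : Matrix n n ℝ, Gᵀ = G ∧ A * G = G * A ∧ A * (A * G) = A := by
  classical
  set p := A.charpoly with hp
  have hp0 : p ≠ 0 := A.charpoly_monic.ne_zero
  have hex : ∃ i, p.coeff i ≠ 0 := by
    by_contra hc
    push_neg at hc
    exact hp0 (Polynomial.ext fun i => by simpa using hc i)
  set k := Nat.find hex with hkdef
  have hck : p.coeff k ≠ 0 := Nat.find_spec hex
  have hlt : ∀ i < k, p.coeff i = 0 := fun i hi => by
    by_contra hc; exact Nat.find_min hex hi hc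
  have hkd : k ≤ p.natDegree := Polynomial.le_natDegree_of_ne_zero hck
  have heval : ∑ i ∈ Finset.range (p.natDegree + 1), p.coeff i • A ^ i = 0 := by
    have h := A.aeval_self_charpoly
    rwa [Polynomial.aeval_eq_sum_range] at h
  -- split the sum at k
  have hsplit : ∑ i ∈ Finset.Ico k (p.natDegree + 1), p.coeff i • A ^ i = 0 := by
    have h1 : ∑ i ∈ Finset.Ico 0 k, p.coeff i • A ^ i = 0 :=
      Finset.sum_eq_zero fun i hi => by
        rw [hlt i (Finset.mem_Ico.mp hi).2, zero_smul]
    have h2 := Finset.sum_Ico_consecutive (fun i => p.coeff i • A ^ i)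
      (Nat.zero_le k) (by omega : k ≤ p.natDegree + 1)
    have h3 : ∑ i ∈ Finset.Ico 0 (p.natDegree + 1), p.coeff i • A ^ i = 0 := by
      rw [← Finset.range_eq_Ico]
      exact heval
    rw [h1, zero_add] at h2
    rw [h2]
    exact h3
  have hbot : p.coeff k • A ^ k +
      ∑ i ∈ Finset.Ico (k + 1) (p.natDegree + 1), p.coeff i • A ^ i = 0 := by
    rw [← Finset.sum_eq_sum_Ico_succ_bot (by omega : k < p.natDegree + 1)
      (fun i => p.coeff i • A ^ i)]
    exact hsplit
  set S : Matrix n n ℝ :=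
    ∑ i ∈ Finset.Ico (k + 1) (p.natDegree + 1), p.coeff i • A ^ (i - (k + 1)) with hS
  have hfac : ∑ i ∈ Finset.Ico (k + 1) (p.natDegree + 1), p.coeff i • A ^ i
      = A ^ (k + 1) * S := by
    rw [hS, Finset.mul_sum]
    refine Finset.sum_congr rfl fun i hi => ?_
    have hik : k + 1 ≤ i := (Finset.mem_Ico.mp hi).1
    rw [mul_smul_comm, ← pow_add]
    congr 2
    omega
  have hAkS : A ^ (k + 1) * S = -(p.coeff k • A ^ k) := by
    rw [← hfac]
    linear_combination (norm := abel) hbot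
  set G : Matrix n n ℝ := (-(p.coeff k)⁻¹) • S with hG
  have hpowG : A ^ (k + 1) * G = A ^ k := by
    rw [hG, Matrix.mul_smul, hAkS, smul_neg, neg_smul, neg_neg, smul_smul,
      inv_mul_cancel₀ hck, one_smul]
  -- symmetry and commutation for S (hence G)
  have hSt : Sᵀ = S := by
    rw [hS, Matrix.transpose_sum]
    refine Finset.sum_congr rfl fun i _ => ?_
    rw [Matrix.transpose_smul, Matrix.transpose_pow, hA]
  have hScomm : A * S = S * A := by
    rw [hS, Finset.mul_sum, Finset.sum_mul]
    refine Finset.sum_congr rfl fun i _ => ?_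
    rw [mul_smul_comm, smul_mul_assoc, ← pow_succ, ← pow_succ']
  have hGt : Gᵀ = G := by rw [hG, Matrix.transpose_smul, hSt]
  have hGcomm : A * G = G * A := by
    rw [hG, mul_smul_comm, smul_mul_assoc, hScomm]
  refine ⟨G, hGt, hGcomm, ?_⟩
  have hzero : A ^ k * (A * G - 1) = 0 := by
    rw [Matrix.mul_sub, Matrix.mul_one, ← Matrix.mul_assoc, ← pow_succ, hpowG,
      sub_self]
  have := pow_cancel' hA k (A * G - 1) hzero
  rw [Matrix.mul_sub, Matrix.mul_one, sub_eq_zero] at this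
  exact this

lemma exists_mp (M : Matrix m n ℝ) : ∃ Md, IsMoorePenrose M Md := by
  obtain ⟨G, hGt, hGc, hGA⟩ := exists_sym_gen (Mᵀ * M)
    (by rw [Matrix.transpose_mul, Matrix.transpose_transpose])
  set A := Mᵀ * M with hAdef
  -- key cancellation : M * (A * G) = M
  have h2 : A * (A * G - 1) = 0 := by
    rw [Matrix.mul_sub, hGA, Matrix.mul_one, sub_self]
  have h0 : (M * (A * G - 1))ᵀ * (M * (A * G - 1)) = 0 := by
    rw [Matrix.transpose_mul, Matrix.mul_assoc, ← Matrix.mul_assoc Mᵀ M, ← hAdef,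
      h2, Matrix.mul_zero]
  have hMzero : M * (A * G - 1) = 0 := conj_zero h0
  have hMAG : M * (A * G) = M := by
    rw [Matrix.mul_sub, Matrix.mul_one, sub_eq_zero] at hMzero
    exact hMzero
  -- auxiliary identities
  have hNA : G * A * G * A = G * A := by
    calc G * A * G * A = G * (A * (G * A)) := by simp only [Matrix.mul_assoc]
      _ = G * (A * (A * G)) := by rw [← hGc]
      _ = G * A := by rw [hGA]
  have hNt : (G * A * G)ᵀ = G * A * G := by
    rw [Matrix.transpose_mul, Matrix.transpose_mul, hGt,
      show (Mᵀ * M)ᵀ = Mᵀ * M by rw [Matrix.transpose_mul, Matrix.transpose_transpose]]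
    rw [← hAdef, ← Matrix.mul_assoc]
  refine ⟨G * A * G * Mᵀ, ?_, ?_, ?_, ?_⟩
  · -- M * Md * M = M
    calc M * (G * A * G * Mᵀ) * M = M * (G * A * G * A) := by
          simp only [Matrix.mul_assoc, hAdef]
      _ = M * (G * A) := by rw [hNA]
      _ = M * (A * G) := by rw [hGc]
      _ = M := hMAG
  · -- Md * M * Md = Md
    calc (G * A * G * Mᵀ) * M * (G * A * G * Mᵀ)
        = (G * A * G * A) * (G * A * G * Mᵀ) := by
          simp only [Matrix.mul_assoc, hAdef]
      _ = (G * A) * (G * A * G * Mᵀ) := by rw [hNA]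
      _ = (G * A * G * A) * (G * Mᵀ) := by simp only [Matrix.mul_assoc]
      _ = (G * A) * (G * Mᵀ) := by rw [hNA]
      _ = G * A * G * Mᵀ := by simp only [Matrix.mul_assoc]
  · -- (M * Md)ᵀ = M * Md
    rw [Matrix.transpose_mul, Matrix.transpose_mul, Matrix.transpose_transpose,
      hNt]
    simp only [Matrix.mul_assoc]
  · -- (Md * M)ᵀ = Md * M
    have hMdM : (G * A * G * Mᵀ) * M = G * A := by
      rw [Matrix.mul_assoc (G * A * G) Mᵀ M, ← hAdef, hNA]
    rw [hMdM, Matrix.transpose_mul, hGt,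
      show Aᵀ = A by rw [hAdef, Matrix.transpose_mul, Matrix.transpose_transpose],
      hGc]

lemma pinv_mp (M : Matrix m n ℝ) : IsMoorePenrose M (pinv M) := by
  have h : ∃ Md, IsMoorePenrose M Md := exists_mp M
  unfold pinv
  rw [dif_pos h]
  exact h.choose_spec

lemma exists_right_inverse {r : ℕ} {c : Type*} [Fintype c] [DecidableEq c]
    (M : Matrix (Fin r) c ℝ) (h : M.rank = r) : ∃ R : Matrix c (Fin r) ℝ, M * R = 1 := by
  classical
  have hsurj : Function.Surjective M.mulVecLin := by
    rw [← LinearMap.range_eq_top]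
    apply Submodule.eq_top_of_finrank_eq
    have h1 : Module.finrank ℝ ↥(LinearMap.range M.mulVecLin) = r := h
    rw [h1]
    simp [Module.finrank_pi]
  choose g hg using hsurj
  refine ⟨Matrix.of (fun i j => g (Pi.single j 1) i), ?_⟩
  ext i j
  have h2 := congrFun (hg (Pi.single j 1)) i
  simp only [Matrix.mulVecLin_apply] at h2
  rw [Matrix.mul_apply]
  simp only [Matrix.of_apply]
  rw [show (∑ x, M i x * g (Pi.single j 1) x) = (M *ᵥ g (Pi.single j 1)) i from rfl, h2]
  simp [Matrix.one_apply, Pi.single_apply]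

lemma pinv_right_inv {r : ℕ} {c : Type*} [Fintype c] [DecidableEq c]
    (M : Matrix (Fin r) c ℝ) (h : M.rank = r) : M * pinv M = 1 := by
  obtain ⟨R, hR⟩ := exists_right_inverse M h
  have h1 := (pinv_mp M).1
  have h2 : M * pinv M * (M * R) = M * R := by
    calc M * pinv M * (M * R) = (M * pinv M * M) * R := by
          simp only [Matrix.mul_assoc]
      _ = M * R := by rw [h1]
  rwa [hR, Matrix.mul_one] at h2

lemma frob_one_sub_proj_le {a b : Type*} [Fintype a] [Fintype b] [DecidableEq a]
    [DecidableEq b]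
    (P : Matrix a a ℝ) (hPs : Pᵀ = P) (hPi : P * P = P) (X : Matrix a b ℝ) :
    frob ((1 - P) * X) ≤ frob X := by
  have hQ : (1 - P) * (1 - P) = 1 - P := by
    rw [sub_mul, one_mul, mul_sub, mul_one, hPi]
    simp
  have e1 : ((1 - P) * X)ᵀ * ((1 - P) * X) = Xᵀ * ((1 - P) * X) := by
    rw [Matrix.transpose_mul,
      show (1 - P)ᵀ = 1 - P by rw [Matrix.transpose_sub, Matrix.transpose_one, hPs],
      Matrix.mul_assoc, ← Matrix.mul_assoc (1 - P) (1 - P) X, hQ]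
  have e2 : (P * X)ᵀ * (P * X) = Xᵀ * (P * X) := by
    rw [Matrix.transpose_mul, hPs, Matrix.mul_assoc, ← Matrix.mul_assoc P P X, hPi]
  have key : frobSq X = frobSq ((1 - P) * X) + frobSq (P * X) := by
    rw [frobSq_eq_trace, frobSq_eq_trace, frobSq_eq_trace, ← Matrix.trace_add]
    congr 1
    rw [e1, e2, ← Matrix.mul_add, ← Matrix.add_mul, sub_add_cancel, Matrix.one_mul]
  apply frob_le_frob
  have := frobSq_nonneg (P * X)
  linarith

end HMTAux

open HMTAux

/-- Structural perturbation bound for the HMT approximation error under a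
perturbed sketching matrix `(B+E)Ω`: if `V₁ᵀΩ` has full row rank, then
`‖(I − P_{(B+E)Ω})B‖_F ≤ √(‖Σ₂‖_F² + ‖Σ₂ V₂ᵀΩ(V₁ᵀΩ)†‖_F²)
  + ‖E V₂ (V₂ᵀΩ)(V₁ᵀΩ)†‖_F + ‖E‖_F`. -/
theorem hmt_perturbation_bound {r p m' s' : ℕ}
    (U : Matrix (Fin r ⊕ Fin m') (Fin r ⊕ Fin m') ℝ)
    (d₁ : Fin r → ℝ) (S₂ : Matrix (Fin m') (Fin s') ℝ)
    (V₁ : Matrix (Fin r ⊕ Fin s') (Fin r) ℝ)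
    (V₂ : Matrix (Fin r ⊕ Fin s') (Fin s') ℝ)
    (B E : Matrix (Fin r ⊕ Fin m') (Fin r ⊕ Fin s') ℝ)
    (Ω : Matrix (Fin r ⊕ Fin s') (Fin (r + p)) ℝ)
    (hU : Uᵀ * U = 1)
    (hV : (fromCols V₁ V₂)ᵀ * fromCols V₁ V₂ = 1)
    (hB : B = U * fromBlocks (diagonal d₁) 0 0 S₂ * (fromCols V₁ V₂)ᵀ)
    (hS2diag : ∀ (i : Fin m') (j : Fin s'), (i : ℕ) ≠ (j : ℕ) → S₂ i j = 0)
    (hd₁pos : ∀ i, 0 ≤ d₁ i) (hS₂pos : ∀ i j, 0 ≤ S₂ i j)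
    (hd₁mono : ∀ i j : Fin r, i ≤ j → d₁ j ≤ d₁ i)
    (hcross : ∀ i j k, S₂ i j ≤ d₁ k)
    (hrank : (V₁ᵀ * Ω).rank = r) :
    frob ((1 - ((B + E) * Ω) * pinv ((B + E) * Ω)) * B) ≤
      Real.sqrt (frob S₂ ^ 2 + frob (S₂ * (V₂ᵀ * Ω) * pinv (V₁ᵀ * Ω)) ^ 2) +
        frob (E * V₂ * (V₂ᵀ * Ω) * pinv (V₁ᵀ * Ω)) + frob E := by
  classical
  set D : Matrix (Fin r) (Fin r) ℝ := diagonal d₁ with hD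
  set Ω₁ : Matrix (Fin r) (Fin (r + p)) ℝ := V₁ᵀ * Ω with hΩ₁
  set Ω₂ : Matrix (Fin s') (Fin (r + p)) ℝ := V₂ᵀ * Ω with hΩ₂
  set Ωd : Matrix (Fin (r + p)) (Fin r) ℝ := pinv Ω₁ with hΩd
  set M : Matrix (Fin r ⊕ Fin m') (Fin (r + p)) ℝ := (B + E) * Ω with hM
  -- orthogonality facts
  have hVV' : fromCols V₁ V₂ * (fromCols V₁ V₂)ᵀ = 1 :=
    mul_eq_one_comm.mp hV
  have hVb : fromBlocks (V₁ᵀ * V₁) (V₁ᵀ * V₂) (V₂ᵀ * V₁) (V₂ᵀ * V₂) =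
      fromBlocks 1 0 0 1 := by
    rw [← Matrix.fromRows_mul_fromCols, ← Matrix.transpose_fromCols, hV,
      Matrix.fromBlocks_one]
  have h11 : V₁ᵀ * V₁ = 1 := by
    have h := congrArg Matrix.toBlocks₁₁ hVb
    rwa [Matrix.toBlocks_fromBlocks₁₁, Matrix.toBlocks_fromBlocks₁₁] at h
  have hsum : V₁ * V₁ᵀ + V₂ * V₂ᵀ = 1 := by
    have := hVV'
    rwa [Matrix.transpose_fromCols, Matrix.fromCols_mul_fromRows] at this
  have hΩinv : Ω₁ * Ωd = 1 := pinv_right_inv Ω₁ hrank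
  -- projection facts
  have hmp := pinv_mp M
  have hPs : (M * pinv M)ᵀ = M * pinv M := hmp.2.2.1
  have hPi : (M * pinv M) * (M * pinv M) = M * pinv M := by
    rw [← Matrix.mul_assoc, hmp.1]
  have hPM : (1 - M * pinv M) * M = 0 := by
    rw [Matrix.sub_mul, Matrix.one_mul, hmp.1, sub_self]
  -- step 1 : replace B by B - M * (Ωd * V₁ᵀ)
  have step1 : (1 - M * pinv M) * B = (1 - M * pinv M) * (B - M * (Ωd * V₁ᵀ)) := by
    rw [Matrix.mul_sub, ← Matrix.mul_assoc (1 - M * pinv M) M (Ωd * V₁ᵀ), hPM,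
      Matrix.zero_mul, sub_zero]
  -- the structural identity
  have hA2 : B * Ω = U * fromRows (D * Ω₁) (S₂ * Ω₂) := by
    rw [hB, Matrix.transpose_fromCols, Matrix.mul_assoc, Matrix.mul_assoc,
      Matrix.fromRows_mul, Matrix.fromBlocks_mul_fromRows, Matrix.zero_mul,
      Matrix.zero_mul, add_zero, zero_add]
  have hA3 : B * Ω * (Ωd * V₁ᵀ) = U * fromRows (D * V₁ᵀ) (S₂ * Ω₂ * Ωd * V₁ᵀ) := by
    have c1 : D * Ω₁ * (Ωd * V₁ᵀ) = D * V₁ᵀ := by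
      rw [Matrix.mul_assoc D, ← Matrix.mul_assoc Ω₁, hΩinv, Matrix.one_mul]
    have c2 : S₂ * Ω₂ * (Ωd * V₁ᵀ) = S₂ * Ω₂ * Ωd * V₁ᵀ := by
      simp only [Matrix.mul_assoc]
    rw [hA2, Matrix.mul_assoc U, Matrix.fromRows_mul, c1, c2]
  have hA4 : B = U * fromRows (D * V₁ᵀ) (S₂ * V₂ᵀ) := by
    rw [hB, Matrix.transpose_fromCols, Matrix.mul_assoc,
      Matrix.fromBlocks_mul_fromRows, Matrix.zero_mul, Matrix.zero_mul, add_zero,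
      zero_add]
  have hΩdec : Ω = V₁ * Ω₁ + V₂ * Ω₂ := by
    calc Ω = 1 * Ω := (Matrix.one_mul Ω).symm
      _ = (V₁ * V₁ᵀ + V₂ * V₂ᵀ) * Ω := by rw [hsum]
      _ = V₁ * (V₁ᵀ * Ω) + V₂ * (V₂ᵀ * Ω) := by
          rw [Matrix.add_mul, Matrix.mul_assoc, Matrix.mul_assoc]
      _ = V₁ * Ω₁ + V₂ * Ω₂ := by rw [← hΩ₁, ← hΩ₂]
  have hA5 : E * Ω * (Ωd * V₁ᵀ) = E * (V₁ * V₁ᵀ) + E * V₂ * Ω₂ * Ωd * V₁ᵀ := by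
    have hx : Ω * (Ωd * V₁ᵀ) = V₁ * V₁ᵀ + V₂ * (Ω₂ * Ωd * V₁ᵀ) := by
      rw [hΩdec, Matrix.add_mul]
      congr 1
      · rw [Matrix.mul_assoc, ← Matrix.mul_assoc Ω₁, hΩinv, Matrix.one_mul]
      · simp only [Matrix.mul_assoc]
    rw [Matrix.mul_assoc E Ω, hx, Matrix.mul_add]
    congr 1
    simp only [Matrix.mul_assoc]
  have hId : B - M * (Ωd * V₁ᵀ) =
      U * fromRows (0 : Matrix (Fin r) (Fin r ⊕ Fin s') ℝ) (S₂ * V₂ᵀ - S₂ * Ω₂ * Ωd * V₁ᵀ) - E * (V₁ * V₁ᵀ) -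
        E * V₂ * Ω₂ * Ωd * V₁ᵀ := by
    have hMsplit : M * (Ωd * V₁ᵀ) = B * Ω * (Ωd * V₁ᵀ) + E * Ω * (Ωd * V₁ᵀ) := by
      rw [hM, Matrix.add_mul, Matrix.add_mul]
    rw [hMsplit, hA3, hA5, hA4]
    rw [show ∀ (x y z w : Matrix (Fin r ⊕ Fin m') (Fin r ⊕ Fin s') ℝ),
      x - (y + (z + w)) = (x - y - z) - w from fun x y z w => by abel]
    congr 1
    congr 1
    rw [← Matrix.mul_sub]
    congr 1
    ext (i | i) j <;> simp [Matrix.sub_apply, Sum.elim_inl, Sum.elim_inr]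
  -- norm computations
  have hb1 : frob (U * fromRows (0 : Matrix (Fin r) (Fin r ⊕ Fin s') ℝ) (S₂ * V₂ᵀ - S₂ * Ω₂ * Ωd * V₁ᵀ)) =
      Real.sqrt (frob S₂ ^ 2 + frob (S₂ * Ω₂ * Ωd) ^ 2) := by
    rw [frob_eq, frobSq_ortho_mul _ U hU, frobSq_fromRows, frobSq_zero, zero_add]
    have hdec : S₂ * V₂ᵀ - S₂ * Ω₂ * Ωd * V₁ᵀ =
        fromCols (-(S₂ * Ω₂ * Ωd)) S₂ * (fromCols V₁ V₂)ᵀ := by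
      rw [Matrix.transpose_fromCols, Matrix.fromCols_mul_fromRows,
        Matrix.neg_mul]
      abel
    rw [hdec, frobSq_mul_rowOrtho _ _ (by rw [Matrix.transpose_transpose]; exact hV),
      frobSq_fromCols, frobSq_neg, frob_sq, frob_sq, add_comm]
  have hb2 : frob (E * V₂ * Ω₂ * Ωd * V₁ᵀ) = frob (E * V₂ * Ω₂ * Ωd) := by
    rw [frob_eq, frob_eq, frobSq_mul_rowOrtho _ V₁ᵀ
      (by rw [Matrix.transpose_transpose]; exact h11)]
  have hb3 : frob (E * (V₁ * V₁ᵀ)) ≤ frob E := by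
    have e1 : frobSq (E * (V₁ * V₁ᵀ)) = frobSq (E * V₁) := by
      rw [← Matrix.mul_assoc]
      exact frobSq_mul_rowOrtho (E * V₁) V₁ᵀ
        (by rw [Matrix.transpose_transpose]; exact h11)
    have e2 : frobSq (E * V₁) + frobSq (E * V₂) = frobSq E := by
      have : frobSq (E * fromCols V₁ V₂) = frobSq E :=
        frobSq_mul_rowOrtho E (fromCols V₁ V₂) hVV'
      rwa [Matrix.mul_fromCols, frobSq_fromCols] at this
    apply frob_le_frob
    rw [e1]
    have := frobSq_nonneg (E * V₂)
    linarith [e2]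
  -- assemble
  calc frob ((1 - M * pinv M) * B)
      = frob ((1 - M * pinv M) * (B - M * (Ωd * V₁ᵀ))) := by rw [step1]
    _ ≤ frob (B - M * (Ωd * V₁ᵀ)) := frob_one_sub_proj_le _ hPs hPi _
    _ = frob (U * fromRows (0 : Matrix (Fin r) (Fin r ⊕ Fin s') ℝ) (S₂ * V₂ᵀ - S₂ * Ω₂ * Ωd * V₁ᵀ) - E * (V₁ * V₁ᵀ) -
          E * V₂ * Ω₂ * Ωd * V₁ᵀ) := by rw [hId]
    _ ≤ frob (U * fromRows (0 : Matrix (Fin r) (Fin r ⊕ Fin s') ℝ) (S₂ * V₂ᵀ - S₂ * Ω₂ * Ωd * V₁ᵀ)) +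
          frob (E * (V₁ * V₁ᵀ)) + frob (E * V₂ * Ω₂ * Ωd * V₁ᵀ) :=
        frob_sub_sub_le _ _ _
    _ ≤ Real.sqrt (frob S₂ ^ 2 + frob (S₂ * Ω₂ * Ωd) ^ 2) +
          frob (E * V₂ * Ω₂ * Ωd) + frob E := by
        rw [hb1, hb2]
        linarith [hb3]
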